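/- Let A be symmetric with ρ(A) = ρ < 1 and A1 = ρ1, and σ²_gap > 0, β ∈ ℝ. Then (1/σ²_gap)·(R₁ − R₃) restricted to the case S̄ = 0 (i.e., Σ = σ²_gap I + β 11ᵀ) equals A + (βρ/σ²_gap) 11ᵀ. In particular the error matrix is the constant matrix (βρ/σ²_gap) 11ᵀ, whose oscillation (max entry minus min entry) is zero, so the estimator is structurally consistent for any β. -/

import Mathlib

open scoped Matrix.Norms.L2Operator

/-- Oscillation of a real matrix: max entry minus min entry. -/
noncomputable def Matrix.osc {N : ℕ} [NeZero N] (M : Matrix (Fin N) (Fin N) ℝ) : ℝ :=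
  (Finset.univ.sup' (Finset.univ_nonempty) fun p : Fin N × Fin N => M p.1 p.2)
    - (Finset.univ.inf' (Finset.univ_nonempty) fun p : Fin N × Fin N => M p.1 p.2)

/-- With `Σ = σ²_gap I + β 11ᵀ` (i.e. `S̄ = 0`), the normalized `R₁ − R₃` estimator
equals `A + (βρ/σ²_gap) 11ᵀ`: the error matrix is the constant matrix
`(βρ/σ²_gap) 11ᵀ`, whose oscillation is zero, so it is structurally consistent. -/
theorem R1_sub_R3_flat_noise
    {N : ℕ} [NeZero N] (A : Matrix (Fin N) (Fin N) ℝ) (σgap2 β ρ : ℝ)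
    (hA : A.IsHermitian) (hρ : ‖A‖ = ρ) (hρ1 : ρ < 1)
    (hσ : 0 < σgap2)
    (hone : A.mulVec (fun _ => 1) = ρ • ((fun _ => 1) : Fin N → ℝ)) :
    (1 / σgap2) • ((1 - A ^ 2) *
        ∑' i : ℕ, A ^ (i + 1)
          * (σgap2 • (1 : Matrix (Fin N) (Fin N) ℝ)
              + β • (Matrix.of fun _ _ => (1 : ℝ))) * A ^ i)
      = A + (β * ρ / σgap2) • (Matrix.of fun _ _ => (1 : ℝ)) ∧
    Matrix.osc ((β * ρ / σgap2) • (Matrix.of fun _ _ => (1 : ℝ))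
        : Matrix (Fin N) (Fin N) ℝ) = 0 := by
  set J : Matrix (Fin N) (Fin N) ℝ := Matrix.of fun _ _ => (1 : ℝ) with hJ
  have hρ0 : 0 ≤ ρ := hρ ▸ norm_nonneg A
  -- A * J = ρ • J
  have hAJ : A * J = ρ • J := by
    ext i j
    have := congrFun hone i
    simpa [Matrix.mulVec, dotProduct, Matrix.mul_apply, hJ] using this
  -- J * A = ρ • J  (uses symmetry)
  have hsym : ∀ i j, A i j = A j i := by
    intro i j
    have h := congrFun (congrFun hA i) j
    simp only [Matrix.conjTranspose_apply, RCLike.star_def, starRingEnd_apply, star_trivial] at h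
    exact h.symm
  have hJA : J * A = ρ • J := by
    ext i j
    have := congrFun hone j
    simp only [Matrix.mulVec, dotProduct, mul_one, Pi.smul_apply, smul_eq_mul] at this
    simp only [Matrix.mul_apply, hJ, Matrix.of_apply, one_mul, Matrix.smul_apply,
      smul_eq_mul, mul_one]
    calc ∑ k, A k j = ∑ k, A j k := by
          refine Finset.sum_congr rfl fun k _ => hsym k j
      _ = ρ := this
  have hApowJ : ∀ n : ℕ, A ^ n * J = (ρ ^ n) • J := by
    intro n
    induction n with
    | zero => simp
    | succ n ih =>
      rw [pow_succ, pow_succ, mul_assoc, hAJ, Matrix.mul_smul, ih, smul_smul,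
        mul_comm]
  have hJApow : ∀ n : ℕ, J * A ^ n = (ρ ^ n) • J := by
    intro n
    induction n with
    | zero => simp
    | succ n ih =>
      rw [pow_succ, pow_succ, ← mul_assoc, ih, Matrix.smul_mul, hJA, smul_smul,
        mul_comm]
  -- term computation
  have hterm : ∀ i : ℕ,
      A ^ (i + 1) * (σgap2 • (1 : Matrix (Fin N) (Fin N) ℝ) + β • J) * A ^ i
        = σgap2 • A ^ (2 * i + 1) + (β * ρ ^ (2 * i + 1)) • J := by
    intro i
    rw [mul_add, add_mul, Matrix.mul_smul, mul_one, Matrix.smul_mul,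
      Matrix.mul_smul, Matrix.smul_mul, ← pow_add, mul_assoc, hJApow,
      Matrix.mul_smul, hApowJ, smul_smul, smul_smul,
      show i + 1 + i = 2 * i + 1 from by omega]
    congr 1
    congr 1
    ring
  have hA2 : ‖A ^ 2‖ < 1 := by
    calc ‖A ^ 2‖ ≤ ‖A‖ ^ 2 := norm_pow_le' A (by norm_num)
      _ = ρ ^ 2 := by rw [hρ]
      _ ≤ ρ := by nlinarith
      _ < 1 := hρ1
  have hρ2 : ρ ^ 2 < 1 := by nlinarith
  have hρ2' : |ρ ^ 2| < 1 := by rw [abs_of_nonneg (by positivity)]; exact hρ2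
  -- summabilities
  have hsumA2 : Summable fun i : ℕ => (A ^ 2) ^ i :=
    summable_geometric_of_norm_lt_one hA2
  have hsumA : Summable fun i : ℕ => A ^ (2 * i + 1) := by
    have h : (fun i : ℕ => A ^ (2 * i + 1)) = fun i => (A ^ 2) ^ i * A :=
      funext fun i => by rw [pow_succ, pow_mul]
    rw [h]; exact hsumA2.mul_right A
  have hsumρ : Summable fun i : ℕ => ρ ^ (2 * i + 1) := by
    have h : (fun i : ℕ => ρ ^ (2 * i + 1)) = fun i => (ρ ^ 2) ^ i * ρ :=
      funext fun i => by rw [pow_succ, pow_mul]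
    rw [h]; exact (summable_geometric_of_abs_lt_one hρ2').mul_right ρ
  have hsum1 : Summable fun i : ℕ => σgap2 • A ^ (2 * i + 1) := hsumA.const_smul _
  have hsum2 : Summable fun i : ℕ => (β * ρ ^ (2 * i + 1)) • J := by
    apply Summable.smul_const
    exact hsumρ.mul_left β
  -- compute the tsum
  have htsum : (∑' i : ℕ, A ^ (i + 1)
          * (σgap2 • (1 : Matrix (Fin N) (Fin N) ℝ) + β • J) * A ^ i)
      = σgap2 • (∑' i : ℕ, A ^ (2 * i + 1))
        + (β * ∑' i : ℕ, ρ ^ (2 * i + 1)) • J := by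
    rw [tsum_congr hterm, Summable.tsum_add hsum1 hsum2]
    congr 1
    · exact Summable.tsum_const_smul _ hsumA
    · rw [Summable.tsum_smul_const (hsumρ.mul_left β) J, ← tsum_mul_left]
  rw [htsum]
  -- (1 - A^2) * ∑' A^(2i+1) = A
  have hgeomA : (1 - A ^ 2) * (∑' i : ℕ, A ^ (2 * i + 1)) = A := by
    have h1 : (∑' i : ℕ, A ^ (2 * i + 1)) = (∑' i : ℕ, (A ^ 2) ^ i) * A := by
      rw [← hsumA2.tsum_mul_right]
      exact tsum_congr fun i => by rw [← pow_mul, pow_succ]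
    rw [h1, ← mul_assoc, mul_neg_geom_series _ hA2, one_mul]
  -- (1 - A^2) * J = (1 - ρ^2) • J
  have hJ2 : (1 - A ^ 2) * J = (1 - ρ ^ 2) • J := by
    rw [sub_mul, one_mul, hApowJ, sub_smul, one_smul]
  -- ∑' ρ^(2i+1) = ρ / (1 - ρ^2)
  have htρ : (∑' i : ℕ, ρ ^ (2 * i + 1)) = ρ / (1 - ρ ^ 2) := by
    have h1 : (∑' i : ℕ, ρ ^ (2 * i + 1)) = (∑' i : ℕ, (ρ ^ 2) ^ i) * ρ := by
      rw [← (summable_geometric_of_abs_lt_one hρ2').tsum_mul_right]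
      exact tsum_congr fun i => by rw [← pow_mul, pow_succ]
    rw [h1, tsum_geometric_of_abs_lt_one hρ2']
    field_simp
  have hne : (1 : ℝ) - ρ ^ 2 ≠ 0 := by nlinarith
  constructor
  · rw [mul_add, Matrix.mul_smul, hgeomA, Matrix.mul_smul, hJ2, htρ,
      smul_add, smul_smul, smul_smul, smul_smul]
    congr 1
    · rw [one_div, inv_mul_cancel₀ hσ.ne', one_smul]
    · congr 1
      field_simp
  · have hc : ∀ p : Fin N × Fin N,
        ((β * ρ / σgap2) • J) p.1 p.2 = β * ρ / σgap2 := by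
      intro p; simp [hJ, Matrix.smul_apply]
    simp only [Matrix.osc]
    rw [Finset.sup'_congr _ rfl (fun p _ => hc p),
      Finset.inf'_congr _ rfl (fun p _ => hc p),
      Finset.sup'_const, Finset.inf'_const, sub_self]
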